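/- arXiv:1907.03053 — 3 statements merged into one kernel-verified Lean document; each statement's English description precedes it below -/
import Mathlib

section
/- Let C^1, …, C^K ∈ ℝ^{N×N} be matrices such that for every k the spectral norm of (C^k)ᵀ (I_N − (1/N)·1_N 1_Nᵀ) C^k is strictly less than one. Then the spectral norm of C̄ᵀ · ((I_N − (1/N)·1_N 1_Nᵀ) ⊗ I_K) · C̄ is strictly less than one, where C̄ = Σ_{k=1}^K C^k ⊗ (e_k e_kᵀ). -/
open Matrix
open scoped Kronecker

/-- `C̄ = Σ_k C^k ⊗ (e_k e_kᵀ)`, indexed by pairs `(i,k)` via Kronecker indexing. -/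
noncomputable def Cbar {N K : ℕ} (C : Fin K → Matrix (Fin N) (Fin N) ℝ) :
    Matrix (Fin N × Fin K) (Fin N × Fin K) ℝ :=
  ∑ k : Fin K, (C k) ⊗ₖ (Matrix.single k k (1 : ℝ))

/-- The centering matrix `I_N − (1/N)·1_N 1_Nᵀ`. -/
noncomputable def centering (N : ℕ) : Matrix (Fin N) (Fin N) ℝ :=
  1 - (N : ℝ)⁻¹ • Matrix.of (fun _ _ => (1 : ℝ))

/-- The spectral norm (ℓ²→ℓ² operator norm) of a square real matrix. -/
noncomputable def matSpectralNorm {n : Type*} [Fintype n] [DecidableEq n]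
    (A : Matrix n n ℝ) : ℝ :=
  ‖Matrix.toEuclideanCLM (𝕜 := ℝ) A‖

/-!
The matrix `C̄` is block diagonal with blocks `C^k`, and for the centering matrix `P` the matrix
`P ⊗ I_K` is block diagonal with every block equal to `P`, so `C̄ᵀ (P ⊗ I_K) C̄` is block diagonal
with blocks `(C^k)ᵀ P C^k`. Splitting a vector into its `K` blocks, `‖x‖² = Σ_k ‖x_k‖²` shows
that the spectral norm of a block diagonal matrix is at most the largest spectral norm of its
blocks, and a maximum of finitely many numbers below one is below one.
-/

namespace Matrix

variable {α 𝕜 m n o : Type*}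

theorem blockDiagonal_mulVec_apply [Fintype n] [Fintype o] [DecidableEq o]
    [NonUnitalNonAssocSemiring α] (M : o → Matrix m n α) (v : n × o → α) (i : m) (k : o) :
    (blockDiagonal M *ᵥ v) (i, k) = (M k *ᵥ fun j => v (j, k)) i := by
  simp [mulVec, dotProduct, Fintype.sum_prod_type_right, blockDiagonal_apply', ite_mul]

theorem sum_kronecker_single_eq_blockDiagonal [Fintype o] [DecidableEq o] [NonAssocSemiring α]
    (M : o → Matrix m n α) :
    ∑ k, M k ⊗ₖ single k k (1 : α) = blockDiagonal M := by
  ext ⟨i, k⟩ ⟨j, l⟩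
  rcases eq_or_ne k l with rfl | hkl
  · simp [sum_apply, single_apply]
  · simp only [sum_apply, kroneckerMap_apply, single_apply, mul_ite, mul_one, mul_zero,
      blockDiagonal_apply', hkl, ↓reduceIte]
    exact Finset.sum_eq_zero fun c _ => if_neg fun h => hkl (h.1.symm.trans h.2)

theorem nnnorm_toEuclideanCLM_blockDiagonal_le [RCLike 𝕜] [Fintype m] [DecidableEq m]
    [Fintype o] [DecidableEq o] (A : o → Matrix m m 𝕜) :
    ‖toEuclideanCLM (𝕜 := 𝕜) (blockDiagonal A)‖₊ ≤
      Finset.univ.sup fun k => ‖toEuclideanCLM (𝕜 := 𝕜) (A k)‖₊ := by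
  set c := Finset.univ.sup fun k => ‖toEuclideanCLM (𝕜 := 𝕜) (A k)‖₊
  have hA (k : o) : ‖toEuclideanCLM (𝕜 := 𝕜) (A k)‖ ≤ c :=
    Finset.le_sup (f := fun k => ‖toEuclideanCLM (𝕜 := 𝕜) (A k)‖₊) (Finset.mem_univ k)
  refine ContinuousLinearMap.opNorm_le_bound _ c.coe_nonneg fun x => ?_
  let block (k : o) : EuclideanSpace 𝕜 m := WithLp.toLp 2 fun i => x (i, k)
  have hx : ‖x‖ ^ 2 = ∑ k, ‖block k‖ ^ 2 := by
    simp only [EuclideanSpace.norm_sq_eq, Fintype.sum_prod_type_right, block]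
  refine (pow_le_pow_iff_left₀ (norm_nonneg _) (mul_nonneg c.coe_nonneg (norm_nonneg _))
    two_ne_zero).1 ?_
  calc ‖toEuclideanCLM (𝕜 := 𝕜) (blockDiagonal A) x‖ ^ 2
      = ∑ k, ‖toEuclideanCLM (𝕜 := 𝕜) (A k) (block k)‖ ^ 2 := by
        simp [EuclideanSpace.norm_sq_eq, Fintype.sum_prod_type_right, block,
          blockDiagonal_mulVec_apply]
    _ ≤ ∑ k, (c * ‖block k‖) ^ 2 := by
      gcongr with k
      exact (ContinuousLinearMap.le_opNorm _ _).trans (by gcongr; exact hA k)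
    _ = (c * ‖x‖) ^ 2 := by simp_rw [mul_pow, ← Finset.mul_sum, hx]

end Matrix

theorem spectralNorm_cbar_lt_one_general {N K : ℕ}
    (C : Fin K → Matrix (Fin N) (Fin N) ℝ)
    (h : ∀ k, matSpectralNorm ((C k)ᵀ * centering N * C k) < 1) :
    matSpectralNorm ((Cbar C)ᵀ * ((centering N) ⊗ₖ (1 : Matrix (Fin K) (Fin K) ℝ)) * (Cbar C))
      < 1 := by
  have hblock : (Cbar C)ᵀ * (centering N ⊗ₖ (1 : Matrix (Fin K) (Fin K) ℝ)) * Cbar C =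
      blockDiagonal fun k => (C k)ᵀ * centering N * C k := by
    rw [Cbar, sum_kronecker_single_eq_blockDiagonal, kronecker_one, blockDiagonal_transpose,
      blockDiagonal_mul, blockDiagonal_mul]
  have hsup : (Finset.univ.sup fun k =>
      ‖toEuclideanCLM (𝕜 := ℝ) ((C k)ᵀ * centering N * C k)‖₊) < 1 :=
    (Finset.sup_lt_iff zero_lt_one).2 fun k _ => h k
  rw [matSpectralNorm, hblock, ← coe_nnnorm, NNReal.coe_lt_one]
  exact (nnnorm_toEuclideanCLM_blockDiagonal_le _).trans_lt hsup

/-- if `‖(C^k)ᵀ (I − (1/N)1 1ᵀ) C^k‖ < 1` for every `k`, then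
`‖C̄ᵀ ((I − (1/N)1 1ᵀ) ⊗ I_K) C̄‖ < 1`. -/
theorem spectralNorm_cbar_lt_one {N K : ℕ} (hN : 0 < N) (hK : 0 < K)
    (C : Fin K → Matrix (Fin N) (Fin N) ℝ)
    (h : ∀ k, matSpectralNorm ((C k)ᵀ * centering N * C k) < 1) :
    matSpectralNorm ((Cbar C)ᵀ * ((centering N) ⊗ₖ (1 : Matrix (Fin K) (Fin K) ℝ)) * (Cbar C))
      < 1 :=
  spectralNorm_cbar_lt_one_general C h
end

section
/- Let (Ω, F, ℙ) be a probability space and let C^1, …, C^K : Ω → ℝ^{N×N} be random matrices such that each random matrix (C^k)ᵀ (I_N − (1/N)·1_N 1_Nᵀ) C^k is integrable and the spectral norm of its expectation 𝔼[(C^k)ᵀ (I_N − (1/N)·1_N 1_Nᵀ) C^k] is strictly less than one for every k ∈ {1,…,K}. Then the spectral norm of 𝔼[C̄ᵀ · ((I_N − (1/N)·1_N 1_Nᵀ) ⊗ I_K) · C̄] is strictly less than one, where C̄(ω) = Σ_{k=1}^K C^k(ω) ⊗ (e_k e_kᵀ). -/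
open Matrix MeasureTheory
open scoped Kronecker

/-!
Both `C̄` and `P ⊗ I_K` are block diagonal, with blocks `C^k` and `P`, so `C̄ᵀ (P ⊗ I_K) C̄` is
block diagonal with blocks `(C^k)ᵀ P C^k`. The entrywise expectation keeps this structure, the
off-diagonal blocks being integrals of `0`. A block diagonal operator acts blockwise,
`‖M x‖² = ∑ₖ ‖Bₖ xₖ‖² ≤ (maxₖ ‖Bₖ‖)² ‖x‖²`, so its spectral norm is `< 1` when every block's is.
-/

lemma Cbar_eq_blockDiagonal {N K : ℕ} (C : Fin K → Matrix (Fin N) (Fin N) ℝ) :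
    Cbar C = blockDiagonal C := by
  ext ⟨a, b⟩ ⟨i, k⟩
  by_cases hbk : b = k
  · subst hbk
    simp [Cbar, Matrix.sum_apply, single_apply]
  · simp only [Cbar, Matrix.sum_apply, kroneckerMap_apply, single_apply, mul_ite, mul_one,
      mul_zero, blockDiagonal_apply_ne _ _ _ hbk]
    exact Finset.sum_eq_zero fun c _ => if_neg fun hc => hbk (hc.1.symm.trans hc.2)

namespace Matrix

lemma blockDiagonal_transpose_mul_kronecker_one_mul {R n κ : Type*} [CommSemiring R] [Fintype n]
    [Fintype κ] [DecidableEq κ] (P : Matrix n n R) (C : κ → Matrix n n R) :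
    (blockDiagonal C)ᵀ * (P ⊗ₖ (1 : Matrix κ κ R)) * blockDiagonal C
      = blockDiagonal fun k => (C k)ᵀ * P * C k := by
  simp only [kronecker_one, blockDiagonal_transpose, blockDiagonal_mul]

lemma of_integral_blockDiagonal {Ω E n κ : Type*} [MeasurableSpace Ω] [NormedAddCommGroup E]
    [NormedSpace ℝ E] [DecidableEq κ] (μ : Measure Ω) (F : Ω → κ → Matrix n n E) :
    (of fun p q => ∫ ω, blockDiagonal (F ω) p q ∂μ)
      = blockDiagonal fun k => of fun i j => ∫ ω, F ω k i j ∂μ := by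
  ext ⟨i, k⟩ ⟨j, l⟩
  by_cases hkl : k = l
  · subst hkl; simp
  · simp [blockDiagonal_apply_ne _ _ _ hkl]

end Matrix

namespace EuclideanSpace

variable {𝕜 n κ : Type*}

def block (x : EuclideanSpace 𝕜 (n × κ)) (k : κ) : EuclideanSpace 𝕜 n :=
  WithLp.toLp 2 fun i => x (i, k)

@[simp]
lemma block_apply (x : EuclideanSpace 𝕜 (n × κ)) (k : κ) (i : n) : x.block k i = x (i, k) :=
  rfl

lemma norm_sq_eq_sum_norm_block_sq [RCLike 𝕜] [Fintype n] [Fintype κ]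
    (x : EuclideanSpace 𝕜 (n × κ)) :
    ‖x‖ ^ 2 = ∑ k, ‖x.block k‖ ^ 2 := by
  simp only [EuclideanSpace.norm_sq_eq, Fintype.sum_prod_type_right, block_apply]

end EuclideanSpace

namespace Matrix

open EuclideanSpace

variable {𝕜 : Type*} [RCLike 𝕜] {n κ : Type*} [Fintype n] [DecidableEq n]
  [Fintype κ] [DecidableEq κ]

lemma block_toEuclideanCLM_blockDiagonal (B : κ → Matrix n n 𝕜)
    (x : EuclideanSpace 𝕜 (n × κ)) (k : κ) :
    (toEuclideanCLM (𝕜 := 𝕜) (blockDiagonal B) x).block k =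
      toEuclideanCLM (𝕜 := 𝕜) (B k) (x.block k) := by
  ext i
  simp [mulVec, dotProduct, Fintype.sum_prod_type_right, blockDiagonal_apply']

lemma norm_toEuclideanCLM_blockDiagonal_le (B : κ → Matrix n n 𝕜) {c : ℝ} (hc : 0 ≤ c)
    (hB : ∀ k, ‖toEuclideanCLM (𝕜 := 𝕜) (B k)‖ ≤ c) :
    ‖toEuclideanCLM (𝕜 := 𝕜) (blockDiagonal B)‖ ≤ c := by
  refine ContinuousLinearMap.opNorm_le_bound _ hc fun x => ?_
  refine le_of_sq_le_sq ?_ (by positivity)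
  calc ‖toEuclideanCLM (𝕜 := 𝕜) (blockDiagonal B) x‖ ^ 2
      = ∑ k, ‖toEuclideanCLM (𝕜 := 𝕜) (B k) (x.block k)‖ ^ 2 := by
        simp only [norm_sq_eq_sum_norm_block_sq, block_toEuclideanCLM_blockDiagonal]
    _ ≤ ∑ k, (c * ‖x.block k‖) ^ 2 := by
        gcongr with k
        exact (ContinuousLinearMap.le_opNorm _ _).trans (by gcongr; exact hB k)
    _ = (c * ‖x‖) ^ 2 := by
        simp only [mul_pow, ← Finset.mul_sum, norm_sq_eq_sum_norm_block_sq]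

end Matrix

lemma matSpectralNorm_blockDiagonal_lt {n κ : Type*} [Fintype n] [DecidableEq n] [Fintype κ]
    [DecidableEq κ] {B : κ → Matrix n n ℝ} {r : ℝ} (hr : 0 < r)
    (hB : ∀ k, matSpectralNorm (B k) < r) : matSpectralNorm (blockDiagonal B) < r := by
  lift r to NNReal using hr.le
  set c := Finset.univ.sup fun k => ‖toEuclideanCLM (𝕜 := ℝ) (B k)‖₊
  have hc : c < r := Finset.sup_lt_iff (by exact_mod_cast hr) |>.2 fun k _ => hB k
  refine lt_of_le_of_lt (norm_toEuclideanCLM_blockDiagonal_le B c.2 fun k => ?_) hc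
  exact_mod_cast Finset.le_sup (f := fun k => ‖toEuclideanCLM (𝕜 := ℝ) (B k)‖₊)
    (Finset.mem_univ k)

theorem spectralNorm_expectation_cbar_lt_one_general {N K : ℕ}
    {Ω : Type*} [MeasureSpace Ω]
    (C : Fin K → Ω → Matrix (Fin N) (Fin N) ℝ)
    (h : ∀ k, matSpectralNorm
        (Matrix.of fun i j => ∫ ω, ((C k ω)ᵀ * centering N * (C k ω)) i j) < 1) :
    matSpectralNorm (Matrix.of fun p q =>
        ∫ ω, ((Cbar fun k => C k ω)ᵀ * ((centering N) ⊗ₖ (1 : Matrix (Fin K) (Fin K) ℝ)) *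
          (Cbar fun k => C k ω)) p q) < 1 := by
  simp only [Cbar_eq_blockDiagonal, blockDiagonal_transpose_mul_kronecker_one_mul]
  rw [of_integral_blockDiagonal volume fun ω k => (C k ω)ᵀ * centering N * C k ω]
  exact matSpectralNorm_blockDiagonal_lt one_pos h

/-- if each random matrix `(C^k)ᵀ (I − (1/N)1 1ᵀ) C^k` is entrywise integrable
and the spectral norm of its entrywise expectation is `< 1` for every `k`, then the spectral
norm of `𝔼[C̄ᵀ ((I − (1/N)1 1ᵀ) ⊗ I_K) C̄]` is `< 1`. -/
theorem spectralNorm_expectation_cbar_lt_one {N K : ℕ} (hN : 0 < N) (hK : 0 < K)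
    {Ω : Type*} [MeasureSpace Ω] [IsProbabilityMeasure (volume : Measure Ω)]
    (C : Fin K → Ω → Matrix (Fin N) (Fin N) ℝ)
    (hint : ∀ k i j, Integrable (fun ω => ((C k ω)ᵀ * centering N * (C k ω)) i j))
    (h : ∀ k, matSpectralNorm
        (Matrix.of fun i j => ∫ ω, ((C k ω)ᵀ * centering N * (C k ω)) i j) < 1) :
    matSpectralNorm (Matrix.of fun p q =>
        ∫ ω, ((Cbar fun k => C k ω)ᵀ * ((centering N) ⊗ₖ (1 : Matrix (Fin K) (Fin K) ℝ)) *
          (Cbar fun k => C k ω)) p q) < 1 :=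
  spectralNorm_expectation_cbar_lt_one_general C h
end

section
/- Let B ∈ ℝ^{N×N} be a nonnegative column stochastic matrix with strictly positive diagonal entries (B(i,i) > 0 for all i), and suppose B is irreducible, i.e., for every pair (i,j) there exists m ≥ 1 such that (B^m)(i,j) > 0. Then there exists a constant α > 0 such that (B^t 1_N)(i) ≥ α for every t ≥ 0 and every i ∈ {1,…,N}. -/
open Matrix Finset

/-!
Irreducibility together with a positive diagonal makes `B` primitive: some power `B ^ k` has
all entries at least some `ε > 0`. Column stochasticity keeps the total weight `∑ i, y_t i`
equal to `N` and hence bounds every weight by `N`, so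
`ε N ≤ (B ^ k *ᵥ y_t) i = y_(t+k) i = (B ^ t *ᵥ y_k) i ≤ N y_t i`.
-/

namespace Matrix

variable {n R : Type*} [Fintype n]

section Order

variable [Semiring R] [PartialOrder R] [IsOrderedRing R]

lemma mul_sum_le_mulVec_apply {M : Matrix n n R} {x : n → R} {ε : R} {i : n}
    (hM : ∀ j, ε ≤ M i j) (hx : ∀ j, 0 ≤ x j) : ε * ∑ j, x j ≤ (M *ᵥ x) i := by
  rw [mul_sum]
  exact sum_le_sum fun j _ => mul_le_mul_of_nonneg_right (hM j) (hx j)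

lemma mulVec_apply_le_mulVec_apply {M : Matrix n n R} {x y : n → R} (hM : ∀ i j, 0 ≤ M i j)
    (hxy : ∀ j, x j ≤ y j) (i : n) : (M *ᵥ x) i ≤ (M *ᵥ y) i :=
  sum_le_sum fun j _ => mul_le_mul_of_nonneg_left (hxy j) (hM i j)

end Order

variable [DecidableEq n]

section Primitive

variable [Ring R] [LinearOrder R] [IsStrictOrderedRing R] {A : Matrix n n R}

/-- With a positive diagonal, a walk can idle at its start, so positive entries of powers
stay positive. -/
lemma pow_apply_pos_of_le (hA : ∀ i j, 0 ≤ A i j) (hdiag : ∀ i, 0 < A i i) {i j : n}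
    {k l : ℕ} (hkl : k ≤ l) (hk : 0 < (A ^ k) i j) : 0 < (A ^ l) i j := by
  induction l, hkl using Nat.le_induction with
  | base => exact hk
  | succ l _ ih =>
    rw [pow_succ', mul_apply]
    exact sum_pos' (fun m _ => mul_nonneg (hA i m) (pow_apply_nonneg hA l m j))
      ⟨i, mem_univ i, mul_pos (hdiag i) ih⟩

theorem IsIrreducible.isPrimitive_of_diag_pos (hA : IsIrreducible A) (hdiag : ∀ i, 0 < A i i) :
    IsPrimitive A := by
  choose k _ hk using (isIrreducible_iff_exists_pow_pos hA.nonneg).1 hA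
  refine ⟨hA.nonneg, univ.sup (fun p : n × n => k p.1 p.2) + 1, Nat.succ_pos _,
    fun i j => pow_apply_pos_of_le hA.nonneg hdiag ?_ (hk i j)⟩
  exact (le_sup (f := fun p : n × n => k p.1 p.2) (mem_univ (i, j))).trans (Nat.le_succ _)

end Primitive

section ColStochastic

variable [CommRing R] [LinearOrder R] [IsStrictOrderedRing R] {A : Matrix n n R}

lemma sum_pow_mulVec_one (hA : A ∈ colStochastic R n) (t : ℕ) :
    ∑ i, (A ^ t *ᵥ 1) i = Fintype.card n := by
  simp [sum_mulVec_of_mem_colStochastic (pow_mem hA t)]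

lemma pow_mulVec_one_apply_le_card (hA : A ∈ colStochastic R n) (t : ℕ) (i : n) :
    (A ^ t *ᵥ 1) i ≤ Fintype.card n := by
  rw [← sum_pow_mulVec_one hA t]
  exact single_le_sum (fun j _ => nonneg_mulVec_of_mem_colStochastic (pow_mem hA t)
    (fun _ => zero_le_one) j) (mem_univ i)

theorem le_pow_mulVec_one_apply (hA : A ∈ colStochastic R n) {k : ℕ} {ε : R}
    (hε : ∀ i j, ε ≤ (A ^ k) i j) (t : ℕ) (i : n) : ε ≤ (A ^ t *ᵥ 1) i := by
  have hcard : (0 : R) < Fintype.card n := Nat.cast_pos.2 (Fintype.card_pos_iff.2 ⟨i⟩)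
  have hlower : ε * Fintype.card n ≤ (A ^ (k + t) *ᵥ 1) i := by
    rw [pow_add, ← mulVec_mulVec, ← sum_pow_mulVec_one hA t]
    exact mul_sum_le_mulVec_apply (hε i)
      (nonneg_mulVec_of_mem_colStochastic (pow_mem hA t) fun _ => zero_le_one)
  have hupper : (A ^ (k + t) *ᵥ 1) i ≤ (A ^ t *ᵥ 1) i * Fintype.card n := by
    rw [add_comm, pow_add, ← mulVec_mulVec]
    calc (A ^ t *ᵥ (A ^ k *ᵥ 1)) i ≤ (A ^ t *ᵥ (Fintype.card n : R) • 1) i :=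
          mulVec_apply_le_mulVec_apply
            (pow_apply_nonneg (fun _ _ => nonneg_of_mem_colStochastic hA) t)
            (fun j => by simpa using pow_mulVec_one_apply_le_card hA k j) i
      _ = (A ^ t *ᵥ 1) i * Fintype.card n := by simp [mulVec_smul, mul_comm]
  exact le_of_mul_le_mul_right (hlower.trans hupper) hcard

end ColStochastic

end Matrix

/-- let `B` be a nonnegative column stochastic matrix with strictly positive
diagonal which is irreducible (for all `i,j` some power `B^m`, `m ≥ 1`, has a positive
`(i,j)` entry). Then the push-sum weights `y_t = B^t 1_N` are uniformly bounded below by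
some constant `α > 0`. -/
theorem pushsum_weights_lower_bound {N : ℕ} (hN : 0 < N)
    (B : Matrix (Fin N) (Fin N) ℝ)
    (hnn : ∀ i j, 0 ≤ B i j)
    (hcol : ∀ j, ∑ i, B i j = 1)
    (hdiag : ∀ i, 0 < B i i)
    (hirr : ∀ i j, ∃ m : ℕ, 1 ≤ m ∧ 0 < (B ^ m) i j) :
    ∃ α : ℝ, 0 < α ∧ ∀ (t : ℕ) (i : Fin N), α ≤ ((B ^ t) *ᵥ (fun _ => (1 : ℝ))) i := by
  have : Nonempty (Fin N) := ⟨⟨0, hN⟩⟩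
  obtain ⟨-, k, -, hpos⟩ :=
    ((isIrreducible_iff_exists_pow_pos hnn).2 hirr).isPrimitive_of_diag_pos hdiag
  obtain ⟨p, hp⟩ := Finite.exists_min fun p : Fin N × Fin N => (B ^ k) p.1 p.2
  exact ⟨(B ^ k) p.1 p.2, hpos _ _,
    le_pow_mulVec_one_apply (mem_colStochastic_iff_sum.2 ⟨hnn, hcol⟩) fun i j => hp (i, j)⟩
end
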